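/- Define F₂ : ℝ² → ℝ by F₂(x,y) = -x if x > 0 and y > 0, and F₂(x,y) = 0 otherwise. Then F₂ is associative, monotone decreasing in each variable, and not idempotent. -/
import Mathlib


/-- The `(k)`-fold iterated composition of a binary operation `f`,
giving a `(k+1)`-ary operation:
`iterComp f k (x₀,…,x_k) = f x₀ (f x₁ (… f x_{k-1} x_k))`. -/
def iterComp {X : Type*} (f : X → X → X) : (k : ℕ) → (Fin (k + 1) → X) → X
  | 0, x => x 0
  | k + 1, x => f (x 0) (iterComp f k (fun i => x i.succ))

/-- `F` (an `n`-ary operation) is derived from the binary operation `f`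
by iterated composition. -/
def DerivedFrom {X : Type*} (f : X → X → X) {n : ℕ} (F : (Fin n → X) → X) : Prop :=
  ∃ h : n - 1 + 1 = n, ∀ x : Fin n → X, F x = iterComp f (n - 1) (fun i => x (Fin.cast h i))

/-- `CompAt F i x` is `F(x₁,…,xᵢ,F(x_{i+1},…,x_{i+n}),x_{i+n+1},…,x_{2n-1})`
(0-indexed: the inner `F` occupies position `i`). -/
def CompAt {X : Type*} {n : ℕ} (F : (Fin n → X) → X) (i : ℕ) (x : ℕ → X) : X :=
  F (fun j => if (j : ℕ) < i then x j
      else if (j : ℕ) = i then F (fun k => x (i + (k : ℕ)))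
      else x ((j : ℕ) + n - 1))

/-- `n`-associativity of an `n`-ary operation. -/
def NAssoc {X : Type*} {n : ℕ} (F : (Fin n → X) → X) : Prop :=
  ∀ x : ℕ → X, ∀ i < n, CompAt F i x = CompAt F 0 x

/-- Idempotency of an `n`-ary operation. -/
def IdemN {X : Type*} {n : ℕ} (F : (Fin n → X) → X) : Prop :=
  ∀ a : X, F (fun _ => a) = a

/-- `e` is a neutral element of the `n`-ary operation `F`. -/
def IsNeutral {X : Type*} {n : ℕ} (F : (Fin n → X) → X) (e : X) : Prop :=
  ∀ (x : X) (i : Fin n), F (Function.update (fun _ => e) i x) = x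

/-- `F` is monotone (order-preserving or order-reversing) in its `i`-th variable. -/
def MonotoneInVar {X : Type*} [Preorder X] {n : ℕ} (F : (Fin n → X) → X) (i : Fin n) : Prop :=
  ∀ a : Fin n → X,
    Monotone (fun t => F (Function.update a i t)) ∨ Antitone (fun t => F (Function.update a i t))

/-- `F` is monotone increasing (order-preserving) in its `i`-th variable. -/
def IncreasingInVar {X : Type*} [Preorder X] {n : ℕ} (F : (Fin n → X) → X) (i : Fin n) : Prop :=
  ∀ a : Fin n → X, Monotone (fun t => F (Function.update a i t))

/-- Associativity of a binary operation. -/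
def Assoc2 {X : Type*} (f : X → X → X) : Prop := ∀ a b c, f (f a b) c = f a (f b c)

/-- A binary operation is monotone (order-preserving or order-reversing) in each variable. -/
def Mono2 {X : Type*} [Preorder X] (f : X → X → X) : Prop :=
  (∀ a, Monotone (f a) ∨ Antitone (f a)) ∧
  (∀ b, Monotone (fun a => f a b) ∨ Antitone (fun a => f a b))

/-- A binary operation is monotone increasing in each variable. -/
def Incr2 {X : Type*} [Preorder X] (f : X → X → X) : Prop :=
  (∀ a, Monotone (f a)) ∧ (∀ b, Monotone (fun a => f a b))

/-- Idempotency of a binary operation. -/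
def Idem2 {X : Type*} (f : X → X → X) : Prop := ∀ x, f x x = x

/-- `e` is a neutral element of a binary operation. -/
def Neutral2 {X : Type*} (f : X → X → X) (e : X) : Prop := ∀ a, f e a = a ∧ f a e = a

/-- The binary operation `F₂(a,b) = Fₙ(a,e,…,e,b)` associated to an `n`-ary operation. -/
def binOf {X : Type*} {n : ℕ} (F : (Fin n → X) → X) (e : X) : X → X → X :=
  fun a b => F (fun j => if (j : ℕ) = 0 then a else if (j : ℕ) = n - 1 then b else e)

/-- `F₂(x,y) = -x` if `x,y > 0` and `0` otherwise is associative, monotone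
decreasing in each variable, but not idempotent. -/
theorem stmt11 (f : ℝ → ℝ → ℝ)
    (hf : ∀ x y, f x y = if 0 < x ∧ 0 < y then -x else 0) :
    Assoc2 f ∧ (∀ x, Antitone (f x)) ∧ (∀ y, Antitone (fun x => f x y)) ∧ ¬ Idem2 f := by
  have hle : ∀ a b, f a b ≤ 0 := by
    intro a b; rw [hf]; split
    · linarith [(‹0 < a ∧ 0 < b›).1]
    · exact le_refl 0
  refine ⟨?_, ?_, ?_, ?_⟩
  · intro a b c
    rw [hf (f a b) c, hf a (f b c), if_neg, if_neg]
    · rintro ⟨_, h⟩; exact absurd (hle b c) (not_le.mpr h)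
    · rintro ⟨h, _⟩; exact absurd (hle a b) (not_le.mpr h)
  · intro x s t hst
    rw [hf, hf]
    split <;> split <;> simp_all <;> linarith
  · intro y s t hst
    show f t y ≤ f s y
    rw [hf, hf]
    split <;> split <;> simp_all <;> linarith
  · intro h
    have := h 1
    rw [hf] at this
    simp at this
    linarith
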